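/- Let H : EuclideanSpace ℝ (Fin m) → Matrix (Fin n) (Fin n) ℝ be differentiable with H(w) symmetric for every w, and suppose λ : EuclideanSpace ℝ (Fin m) → ℝ and v : EuclideanSpace ℝ (Fin m) → EuclideanSpace ℝ (Fin n) are differentiable with H(w) · v(w) = λ(w) • v(w) and ‖v(w)‖ = 1 for all w. Then for every w and every direction u ∈ EuclideanSpace ℝ (Fin m), the directional derivative of λ at w in direction u equals v(w)ᵀ · (D_u H(w)) · v(w), where D_u H(w) is the directional derivative of H at w in direction u (taken entrywise). -/

import Mathlib

/-!
Hellmann–Feynman. On the unit eigenvector `v` one has `λ = vᵀ H v`, so the product rule gives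
`λ' = v'ᵀ H v + vᵀ H' v + vᵀ H v'`. Symmetry of `H` turns both outer terms into `λ · (v' ⬝ v)`,
and `v' ⬝ v = 0` because `v ⬝ v ≡ 1`.
-/

open Matrix

section HellmannFeynman

variable {ι : Type*} [Fintype ι] {t : ℝ}

theorem HasDerivAt.dotProduct {x y : ℝ → ι → ℝ} {x' y' : ι → ℝ}
    (hx : ∀ i, HasDerivAt (fun r => x r i) (x' i) t)
    (hy : ∀ i, HasDerivAt (fun r => y r i) (y' i) t) :
    HasDerivAt (fun r => x r ⬝ᵥ y r) (x' ⬝ᵥ y t + x t ⬝ᵥ y') t := by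
  unfold _root_.dotProduct
  rw [← Finset.sum_add_distrib]
  exact HasDerivAt.fun_sum fun i _ => (hx i).fun_mul (hy i)

theorem HasDerivAt.mulVec {A : ℝ → Matrix ι ι ℝ} {A' : Matrix ι ι ℝ} {x : ℝ → ι → ℝ}
    {x' : ι → ℝ} (hA : ∀ i j, HasDerivAt (fun r => A r i j) (A' i j) t)
    (hx : ∀ i, HasDerivAt (fun r => x r i) (x' i) t) (i : ι) :
    HasDerivAt (fun r => (A r *ᵥ x r) i) ((A' *ᵥ x t + A t *ᵥ x') i) t :=
  HasDerivAt.dotProduct (fun j => hA i j) hx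

theorem dotProduct_self_eq_zero_of_hasDerivAt {x : ℝ → ι → ℝ} {x' : ι → ℝ}
    (hunit : ∀ r, x r ⬝ᵥ x r = 1) (hx : ∀ i, HasDerivAt (fun r => x r i) (x' i) t) :
    x' ⬝ᵥ x t = 0 := by
  have h := (HasDerivAt.dotProduct hx hx).unique
    (by simpa only [hunit] using hasDerivAt_const t (1 : ℝ))
  rw [dotProduct_comm (x t)] at h
  linarith

theorem dotProduct_mulVec_eq_eigenvalue {A : Matrix ι ι ℝ} {x : ι → ℝ} {μ : ℝ}
    (heig : A *ᵥ x = μ • x) (hunit : x ⬝ᵥ x = 1) : x ⬝ᵥ (A *ᵥ x) = μ := by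
  rw [heig, dotProduct_smul, hunit, smul_eq_mul, mul_one]

theorem hasDerivAt_eigenvalue_of_isSymm {A : ℝ → Matrix ι ι ℝ} {A' : Matrix ι ι ℝ}
    {x : ℝ → ι → ℝ} {μ : ℝ → ℝ} (hsymm : (A t).IsSymm) (heig : ∀ r, A r *ᵥ x r = μ r • x r)
    (hunit : ∀ r, x r ⬝ᵥ x r = 1) (hA : ∀ i j, HasDerivAt (fun r => A r i j) (A' i j) t)
    (hx : ∀ i, DifferentiableAt ℝ (fun r => x r i) t) :
    HasDerivAt μ (x t ⬝ᵥ (A' *ᵥ x t)) t := by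
  set x' : ι → ℝ := fun i => deriv (fun r => x r i) t
  have hx' : ∀ i, HasDerivAt (fun r => x r i) (x' i) t := fun i => (hx i).hasDerivAt
  have horth : x' ⬝ᵥ x t = 0 := dotProduct_self_eq_zero_of_hasDerivAt hunit hx'
  have hμ : μ = fun r => x r ⬝ᵥ (A r *ᵥ x r) :=
    funext fun r => (dotProduct_mulVec_eq_eigenvalue (heig r) (hunit r)).symm
  have hleft : x' ⬝ᵥ (A t *ᵥ x t) = 0 := by
    rw [heig, dotProduct_smul, horth, smul_zero]
  have hright : x t ⬝ᵥ (A t *ᵥ x') = 0 := by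
    rw [dotProduct_mulVec, ← hsymm.eq, vecMul_transpose, dotProduct_comm, hleft]
  rw [hμ]
  convert HasDerivAt.dotProduct hx' (HasDerivAt.mulVec hA hx') using 1
  rw [dotProduct_add, hleft, hright, zero_add, add_zero]

end HellmannFeynman

theorem stmt_1_general {m n : ℕ} (H : EuclideanSpace ℝ (Fin m) → Matrix (Fin n) (Fin n) ℝ)
    (hsymm : ∀ w, (H w).IsSymm)
    (lam : EuclideanSpace ℝ (Fin m) → ℝ)
    (v : EuclideanSpace ℝ (Fin m) → EuclideanSpace ℝ (Fin n))
    (hv : Differentiable ℝ v)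
    (heig : ∀ w i, ∑ j, H w i j * v w j = lam w * v w i)
    (hunit : ∀ w, ‖v w‖ = 1) :
    ∀ (w u : EuclideanSpace ℝ (Fin m)) (H' : Matrix (Fin n) (Fin n) ℝ),
      (∀ i j, HasDerivAt (fun r : ℝ => H (w + r • u) i j) (H' i j) 0) →
      HasDerivAt (fun r : ℝ => lam (w + r • u)) (∑ i, ∑ j, v w i * H' i j * v w j) 0 := by
  intro w u H' hH'
  have heig' : ∀ w, H w *ᵥ (v w).ofLp = lam w • (v w).ofLp := fun w =>
    funext fun i => by simpa only [mulVec, dotProduct, Pi.smul_apply, smul_eq_mul] using heig w i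
  have hunit' : ∀ w, (v w).ofLp ⬝ᵥ (v w).ofLp = 1 := fun w => by
    simpa [hunit] using (EuclideanSpace.inner_eq_star_dotProduct (v w) (v w)).symm
  have key := hasDerivAt_eigenvalue_of_isSymm (x := fun r => (v (w + r • u)).ofLp)
    (μ := fun r => lam (w + r • u)) (hsymm _) (fun _ => heig' _) (fun _ => hunit' _) hH'
    (fun i => by fun_prop)
  simpa [dotProduct, mulVec, Finset.mul_sum, mul_assoc] using key

/-- Directional derivative of a distinct eigenvalue of a differentiable family of
symmetric matrices parametrized by `w ∈ ℝᵐ`: for every direction `u`, the derivative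
at `r = 0` of `r ↦ λ(w + r • u)` equals `v(w)ᵀ (D_u H(w)) v(w)`, where `D_u H(w)` is
the entrywise directional derivative of `H` at `w` in direction `u`. -/
theorem stmt_1 {m n : ℕ} (H : EuclideanSpace ℝ (Fin m) → Matrix (Fin n) (Fin n) ℝ)
    (hH : ∀ i j, Differentiable ℝ (fun w => H w i j))
    (hsymm : ∀ w, (H w).IsSymm)
    (lam : EuclideanSpace ℝ (Fin m) → ℝ)
    (v : EuclideanSpace ℝ (Fin m) → EuclideanSpace ℝ (Fin n))
    (hlam : Differentiable ℝ lam) (hv : Differentiable ℝ v)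
    (heig : ∀ w i, ∑ j, H w i j * v w j = lam w * v w i)
    (hunit : ∀ w, ‖v w‖ = 1) :
    ∀ (w u : EuclideanSpace ℝ (Fin m)) (H' : Matrix (Fin n) (Fin n) ℝ),
      (∀ i j, HasDerivAt (fun r : ℝ => H (w + r • u) i j) (H' i j) 0) →
      HasDerivAt (fun r : ℝ => lam (w + r • u)) (∑ i, ∑ j, v w i * H' i j * v w j) 0 :=
  stmt_1_general H hsymm lam v hv heig hunit
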